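/- arXiv:2201.02054 — 2 statements merged into one kernel-verified Lean document; each statement's English description precedes it below -/
import Mathlib

section
/- If the edge cost function c on a complete graph is metric (satisfies the triangle inequality) and the cost of each self-loop satisfies c(v,v) ≤ 2·min_{u≠v} c(u,v), then for any multigraph X whose degree at vertex v is 2·r(v) for every v (with r(v) ≥ 1), the total cost of placing r(v) self-loops at every vertex v is at most 2·cost(X). Formally, ∑_v r(v)·c(v,v) ≤ 2·∑_{uv ∈ X} c(u,v). -/
open Finset

noncomputable section

variable {V : Type*}

/-- Degree of `v` in a multigraph given by a multiset of (possibly diagonal) `Sym2` edges;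
self-loops count twice. -/
def mdeg [DecidableEq V] (E : Multiset (Sym2 V)) (v : V) : ℕ :=
  (E.map (Sym2.lift ⟨fun a b => (if a = v then 1 else 0) + (if b = v then 1 else 0),
    fun _ _ => add_comm _ _⟩)).sum

/-- Cost of a multigraph: multiplicity-weighted sum of (symmetrized) edge costs. -/
def mcost (c : V → V → ℝ) (E : Multiset (Sym2 V)) : ℝ :=
  (E.map (Sym2.lift ⟨fun a b => (c a b + c b a) / 2, fun _ _ => by ring⟩)).sum

/-- The edge multiset of the closed walk visiting the vertices of `w` in cyclic order.
A singleton list yields one self-loop. -/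
def walkEdges (w : List V) : Multiset (Sym2 V) :=
  (((w.zip (w.rotate 1)).map (Function.uncurry Sym2.mk) : List (Sym2 V)) : Multiset (Sym2 V))

/-- Connectivity of a multigraph on its support. -/
def connOn [DecidableEq V] (E : Multiset (Sym2 V)) : Prop :=
  ∀ u v, 0 < mdeg E u → 0 < mdeg E v →
    Relation.ReflTransGen (fun a b => s(a, b) ∈ E) u v

/-- Under metric costs with the self-loop bound `c(v,v) ≤ 2·min_{u≠v} c(u,v)`,
for any multigraph `E` with degree `2·r(v)` at every `v`, the total cost of `r(v)` self-loops
at every vertex is at most `2·cost(E)`. -/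
theorem selfLoops_cost_le_twice_cost [Fintype V] [DecidableEq V]
    (c : V → V → ℝ) (r : V → ℕ) (E : Multiset (Sym2 V))
    (hsymm : ∀ u v, c u v = c v u)
    (hnonneg : ∀ u v, 0 ≤ c u v)
    (htri : ∀ u v w, c u w ≤ c u v + c v w)
    (hloop : ∀ v u, u ≠ v → c v v ≤ 2 * c u v)
    (hr : ∀ v, 1 ≤ r v)
    (hdeg : ∀ v, mdeg E v = 2 * r v) :
    ∑ v, (r v : ℝ) * c v v ≤ 2 * mcost c E := by
  classical
  set g : Sym2 V → ℝ := Sym2.lift ⟨fun a b => c a a + c b b, fun _ _ => add_comm _ _⟩ with hg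
  set cost : Sym2 V → ℝ :=
    Sym2.lift ⟨fun a b => (c a b + c b a) / 2, fun _ _ => by ring⟩ with hcost
  set dR : Sym2 V → V → ℝ := fun e v =>
    Sym2.lift ⟨fun a b => (if a = v then (1:ℝ) else 0) + (if b = v then 1 else 0),
      fun _ _ => add_comm _ _⟩ e with hdR
  have hsingle : ∀ e : Sym2 V, ∑ v, dR e v * c v v = g e := by
    intro e
    induction e using Sym2.inductionOn with
    | hf a b =>
      simp only [hdR, hg, Sym2.lift_mk]
      rw [show (∑ x, ((if a = x then (1:ℝ) else 0) + if b = x then 1 else 0) * c x x)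
          = ∑ x, ((if a = x then c x x else 0) + (if b = x then c x x else 0)) from
        Finset.sum_congr rfl fun v _ => by split_ifs <;> ring]
      rw [Finset.sum_add_distrib, Finset.sum_ite_eq, Finset.sum_ite_eq]
      simp
  have key : ∀ F : Multiset (Sym2 V),
      ∑ v, (mdeg F v : ℝ) * c v v = (F.map g).sum := by
    intro F
    induction F using Multiset.induction_on with
    | empty => simp [mdeg]
    | cons e F ih =>
      have hdegc : ∀ v, (mdeg (e ::ₘ F) v : ℝ) = dR e v + (mdeg F v : ℝ) := by
        intro v
        induction e using Sym2.inductionOn with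
        | hf a b =>
          simp only [mdeg, hdR, Multiset.map_cons, Multiset.sum_cons, Sym2.lift_mk]
          push_cast
          split_ifs <;> simp
      calc ∑ v, (mdeg (e ::ₘ F) v : ℝ) * c v v
          = ∑ v, (dR e v * c v v + (mdeg F v : ℝ) * c v v) := by
            refine Finset.sum_congr rfl fun v _ => ?_
            rw [hdegc v]; ring
        _ = g e + (F.map g).sum := by rw [Finset.sum_add_distrib, hsingle, ih]
        _ = ((e ::ₘ F).map g).sum := by simp
  have termwise : ∀ e ∈ E, g e ≤ 4 * cost e := by
    intro e _
    induction e using Sym2.inductionOn with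
    | hf a b =>
      simp only [hg, hcost, Sym2.lift_mk]
      rcases eq_or_ne a b with rfl | hab
      · have := hnonneg a a; ring_nf; linarith
      · have h1 : c a a ≤ 2 * c b a := hloop a b hab.symm
        have h2 : c b b ≤ 2 * c a b := hloop b a hab
        linarith
  have hsum : (E.map g).sum ≤ (E.map (fun e => 4 * cost e)).sum :=
    Multiset.sum_map_le_sum_map g (fun e => 4 * cost e) termwise
  have hmul : (E.map (fun e => 4 * cost e)).sum = 4 * mcost c E := by
    rw [mcost, Multiset.sum_map_mul_left]
  have hfin : (E.map g).sum ≤ 4 * mcost c E := hmul ▸ hsum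
  have hrc : ∑ v, (r v : ℝ) * c v v = (1 / 2) * ∑ v, (mdeg E v : ℝ) * c v v := by
    rw [Finset.mul_sum]
    apply Finset.sum_congr rfl
    intro v _
    rw [hdeg v]; push_cast; ring
  rw [hrc, key E]
  linarith
end
end

section
/- Let F be a minimum-cost spanning forest of a complete graph G with exactly m components, and let X* be any multigraph on V whose edge set decomposes into m closed walks covering all vertices (so the underlying graph of X* has at most m components and spans V). Then cost(F) ≤ cost(X*). -/
open Finset

noncomputable section

variable {V : Type*}

open Classical in
/-- Cost of a simple graph: sum of its edge costs (each unordered edge counted once). -/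
def sgCost [Fintype V] (c : V → V → ℝ) (F : SimpleGraph V) : ℝ :=
  (1 / 2) * ∑ u, ∑ v, if F.Adj u v then c u v else 0

section Aux
instance myCCfinite [Finite V] (G : SimpleGraph V) : Finite G.ConnectedComponent :=
  Quot.finite _

private lemma natCardOption (α : Type*) [Finite α] : Nat.card (Option α) = Nat.card α + 1 := by
  have := Fintype.ofFinite α
  simp [Nat.card_eq_fintype_card]

/-- Reachability in `G ⊔ edge a b`. -/
private lemma reach_sup_edge {G : SimpleGraph V} {a b u v : V}
    (h : (G ⊔ SimpleGraph.edge a b).Reachable u v) :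
    G.Reachable u v ∨ (G.Reachable u a ∧ G.Reachable b v) ∨
      (G.Reachable u b ∧ G.Reachable a v) := by
  rw [SimpleGraph.reachable_iff_reflTransGen] at h
  induction h using Relation.ReflTransGen.head_induction_on with
  | refl => exact Or.inl (SimpleGraph.Reachable.refl v)
  | @head x y hadj _ ih =>
    rcases hadj with hG | hE
    · rcases ih with h | ⟨h1, h2⟩ | ⟨h1, h2⟩
      · exact Or.inl (hG.reachable.trans h)
      · exact Or.inr (Or.inl ⟨hG.reachable.trans h1, h2⟩)
      · exact Or.inr (Or.inr ⟨hG.reachable.trans h1, h2⟩)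
    · rw [SimpleGraph.edge_adj] at hE
      obtain ⟨⟨rfl, rfl⟩ | ⟨rfl, rfl⟩, hne⟩ := hE
      · rcases ih with h | ⟨h1, h2⟩ | ⟨h1, h2⟩
        · exact Or.inr (Or.inl ⟨SimpleGraph.Reachable.refl _, h⟩)
        · exact Or.inr (Or.inl ⟨SimpleGraph.Reachable.refl _, h2⟩)
        · exact Or.inl h2
      · rcases ih with h | ⟨h1, h2⟩ | ⟨h1, h2⟩
        · exact Or.inr (Or.inr ⟨SimpleGraph.Reachable.refl _, h⟩)
        · exact Or.inl h2
        · exact Or.inr (Or.inr ⟨SimpleGraph.Reachable.refl _, h2⟩)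

private lemma acyclic_sup_edge {G : SimpleGraph V} {a b : V} (hac : G.IsAcyclic)
    (hreach : ¬ G.Reachable a b) : (G ⊔ SimpleGraph.edge a b).IsAcyclic := by
  intro v p hp
  by_cases he : s(a, b) ∈ p.edges
  · have hr : ((G ⊔ SimpleGraph.edge a b) \ SimpleGraph.fromEdgeSet {s(a, b)}).Reachable a b :=
      ((SimpleGraph.adj_and_reachable_delete_edges_iff_exists_cycle
        (G := G ⊔ SimpleGraph.edge a b) (v := a) (w := b)).2 ⟨v, p, hp, he⟩).2
    refine hreach (hr.mono ?_)
    intro x y hxy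
    rw [SimpleGraph.sdiff_adj] at hxy
    obtain ⟨hsup, hnot⟩ := hxy
    rcases hsup with h | h
    · exact h
    · exfalso
      apply hnot
      rw [SimpleGraph.fromEdgeSet_adj]
      rw [SimpleGraph.edge_adj] at h
      obtain ⟨⟨rfl, rfl⟩ | ⟨rfl, rfl⟩, hne⟩ := h
      · exact ⟨rfl, hne⟩
      · exact ⟨Sym2.eq_swap, hne⟩
  · have hsub : ∀ e ∈ p.edges, e ∈ G.edgeSet := by
      intro e hep
      have h1 : e ∈ (G ⊔ SimpleGraph.edge a b).edgeSet := p.edges_subset_edgeSet hep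
      rw [SimpleGraph.edgeSet_sup] at h1
      rcases h1 with h1 | h1
      · exact h1
      · exfalso
        rw [SimpleGraph.edge, SimpleGraph.edgeSet_fromEdgeSet] at h1
        obtain ⟨h2, _⟩ := h1
        rw [Set.mem_singleton_iff] at h2
        subst h2; exact he hep
    exact hac (p.transfer G hsub) (hp.transfer hsub)

private lemma card_cc_sup_edge [Finite V] {G : SimpleGraph V} {a b : V}
    (hreach : ¬ G.Reachable a b) :
    Nat.card G.ConnectedComponent
      = Nat.card (G ⊔ SimpleGraph.edge a b).ConnectedComponent + 1 := by
  classical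
  have hab : a ≠ b := fun h => hreach (h ▸ SimpleGraph.Reachable.refl a)
  set H := G ⊔ SimpleGraph.edge a b with hH
  have hle : G ≤ H := le_sup_left
  -- the equivalence
  have e : G.ConnectedComponent ≃ Option H.ConnectedComponent := by
    refine
      { toFun := Quot.lift
          (fun v => if G.Reachable v b then none else some (H.connectedComponentMk v)) ?_
        invFun := fun o => o.elim (G.connectedComponentMk b)
          (Quot.lift (fun v => if G.Reachable v b then G.connectedComponentMk a
            else G.connectedComponentMk v) ?_)
        left_inv := ?_
        right_inv := ?_ }
    · intro x y hxy
      by_cases hx : G.Reachable x b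
      · rw [if_pos hx, if_pos ((hxy.symm).trans hx)]
      · rw [if_neg hx, if_neg (fun hy => hx (hxy.trans hy))]
        exact congrArg _ (SimpleGraph.ConnectedComponent.sound (hxy.mono hle))
    · intro x y hxy
      rcases reach_sup_edge hxy with h | ⟨h1, h2⟩ | ⟨h1, h2⟩
      · by_cases hx : G.Reachable x b
        · rw [if_pos hx, if_pos (h.symm.trans hx)]
        · rw [if_neg hx, if_neg (fun hy => hx (h.trans hy))]
          exact SimpleGraph.ConnectedComponent.sound h
      · -- x reaches a, b reaches y
        have hy : G.Reachable y b := h2.symm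
        rw [if_pos hy]
        by_cases hx : G.Reachable x b
        · rw [if_pos hx]
        · rw [if_neg hx]
          exact SimpleGraph.ConnectedComponent.sound h1
      · -- x reaches b, a reaches y
        rw [if_pos h1]
        by_cases hy : G.Reachable y b
        · rw [if_pos hy]
        · rw [if_neg hy]
          exact (SimpleGraph.ConnectedComponent.sound h2.symm).symm
    · -- left inverse
      intro C
      induction C using SimpleGraph.ConnectedComponent.ind with
      | _ v =>
        by_cases hv : G.Reachable v b
        · simp only [SimpleGraph.ConnectedComponent.lift]
          show Option.elim (if G.Reachable v b then none
            else some (H.connectedComponentMk v)) _ _ = _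
          rw [if_pos hv]
          exact SimpleGraph.ConnectedComponent.sound hv.symm
        · show Option.elim (if G.Reachable v b then none
            else some (H.connectedComponentMk v)) _ _ = _
          rw [if_neg hv]
          show (if G.Reachable v b then G.connectedComponentMk a
            else G.connectedComponentMk v) = _
          rw [if_neg hv]
    · -- right inverse
      intro o
      match o with
      | none =>
        show (if G.Reachable b b then none else _) = none
        rw [if_pos (SimpleGraph.Reachable.refl b)]
      | some C =>
        induction C using SimpleGraph.ConnectedComponent.ind with
        | _ v =>
          show Quot.lift _ _ ((if G.Reachable v b then G.connectedComponentMk a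
            else G.connectedComponentMk v) : G.ConnectedComponent) = _
          by_cases hv : G.Reachable v b
          · rw [if_pos hv]
            show (if G.Reachable a b then none else some (H.connectedComponentMk a)) = _
            rw [if_neg hreach]
            have hHab : H.Reachable a b := SimpleGraph.Adj.reachable (by
              rw [hH, SimpleGraph.sup_adj, SimpleGraph.edge_adj]
              exact Or.inr ⟨Or.inl ⟨rfl, rfl⟩, hab⟩)
            have : H.Reachable a v := hHab.trans ((hv.mono hle).symm)
            exact congrArg some (SimpleGraph.ConnectedComponent.sound this)
          · rw [if_neg hv]
            show (if G.Reachable v b then none else some (H.connectedComponentMk v)) = _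
            rw [if_neg hv]
  rw [Nat.card_congr e, natCardOption]

private lemma card_cc_eq_of_reach {G H : SimpleGraph V}
    (h : ∀ u v, G.Reachable u v ↔ H.Reachable u v) :
    Nat.card G.ConnectedComponent = Nat.card H.ConnectedComponent := by
  refine Nat.card_congr
    { toFun := Quot.map id (fun u v r => (h u v).1 r)
      invFun := Quot.map id (fun u v r => (h u v).2 r)
      left_inv := ?_
      right_inv := ?_ }
  · intro C; induction C using SimpleGraph.ConnectedComponent.ind with
    | _ v => rfl
  · intro C; induction C using SimpleGraph.ConnectedComponent.ind with
    | _ v => rfl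

private lemma card_cc_bot [Fintype V] :
    Nat.card (⊥ : SimpleGraph V).ConnectedComponent = Fintype.card V := by
  rw [← Nat.card_eq_fintype_card]
  refine Nat.card_congr
    { toFun := Quot.lift id (fun u v r => SimpleGraph.reachable_bot.1 r)
      invFun := (⊥ : SimpleGraph V).connectedComponentMk
      left_inv := ?_
      right_inv := fun v => rfl }
  intro C
  induction C using SimpleGraph.ConnectedComponent.ind with
  | _ v => rfl

/-- Downward induction: forests with any prescribed number of components. -/
private lemma exists_forest [Fintype V] (H : SimpleGraph V) :
    ∀ d n : ℕ, n + d = Fintype.card V → Nat.card H.ConnectedComponent ≤ n →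
      ∃ F' : SimpleGraph V, F' ≤ H ∧ F'.IsAcyclic ∧ Nat.card F'.ConnectedComponent = n := by
  intro d
  induction d with
  | zero =>
    intro n hn _
    exact ⟨⊥, bot_le, SimpleGraph.isAcyclic_bot, by rw [card_cc_bot]; omega⟩
  | succ d ih =>
    intro n hn hle
    obtain ⟨F', hF'le, hF'ac, hF'card⟩ := ih (n + 1) (by omega) (by omega)
    -- find an H-edge joining two F'-components
    have hcross : ∃ x y, H.Adj x y ∧ ¬ F'.Reachable x y := by
      by_contra hno
      push_neg at hno
      have hiff : ∀ u v, F'.Reachable u v ↔ H.Reachable u v := by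
        intro u v
        constructor
        · exact fun h => h.mono hF'le
        · intro h
          rw [SimpleGraph.reachable_iff_reflTransGen] at h
          induction h with
          | refl => exact SimpleGraph.Reachable.refl _
          | tail _ hadj ih2 => exact ih2.trans (hno _ _ hadj)
      have := card_cc_eq_of_reach hiff
      omega
    obtain ⟨x, y, hxy, hnr⟩ := hcross
    refine ⟨F' ⊔ SimpleGraph.edge x y, ?_, acyclic_sup_edge hF'ac hnr, ?_⟩
    · refine sup_le hF'le ?_
      intro u v huv
      rw [SimpleGraph.edge_adj] at huv
      obtain ⟨⟨rfl, rfl⟩ | ⟨rfl, rfl⟩, _⟩ := huv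
      · exact hxy
      · exact hxy.symm
    · have := card_cc_sup_edge hnr
      omega

private lemma mem_zip_append {α : Type*} :
    ∀ (l₁ l₂ l₃ : List α) (p : α × α), p ∈ l₁.zip l₂ → p ∈ l₁.zip (l₂ ++ l₃) := by
  intro l₁
  induction l₁ with
  | nil => intro l₂ l₃ p hp; simp at hp
  | cons a t ih =>
    intro l₂ l₃ p hp
    cases l₂ with
    | nil => simp at hp
    | cons b t₂ =>
      rw [List.cons_append, List.zip_cons_cons] at *
      rcases List.mem_cons.1 hp with rfl | hp
      · exact List.mem_cons_self
      · exact List.mem_cons_of_mem _ (ih t₂ l₃ p hp)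

private lemma chain_rtg {r : V → V → Prop} :
    ∀ (t : List V) (a : V), (∀ p ∈ (a :: t).zip t, r p.1 p.2) →
      ∀ v ∈ a :: t, Relation.ReflTransGen r a v := by
  intro t
  induction t with
  | nil =>
    intro a _ v hv
    rw [List.mem_singleton] at hv
    subst hv; exact .refl
  | cons b t' ih =>
    intro a h v hv
    rcases List.mem_cons.1 hv with rfl | hv
    · exact .refl
    · have hab : r a b := h (a, b) (by rw [List.zip_cons_cons]; exact List.mem_cons_self)
      have h2 : ∀ p ∈ (b :: t').zip t', r p.1 p.2 := by
        intro p hp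
        exact h p (by rw [List.zip_cons_cons]; exact List.mem_cons_of_mem _ hp)
      exact ((Relation.ReflTransGen.single hab).trans (ih b h2 v hv))

private lemma walk_mem_rtg {l : List V} {u v : V} (hu : u ∈ l) (hv : v ∈ l) :
    Relation.ReflTransGen (fun x y => s(x, y) ∈ walkEdges l) u v := by
  cases l with
  | nil => simp at hu
  | cons a t =>
    set r : V → V → Prop := fun x y => s(x, y) ∈ walkEdges (a :: t) with hr
    have hsym : Symmetric r := by
      intro x y h
      rw [hr]
      dsimp only
      rwa [Sym2.eq_swap]
    have key : ∀ p ∈ (a :: t).zip t, r p.1 p.2 := by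
      intro p hp
      have h1 : p ∈ (a :: t).zip (t ++ [a]) := mem_zip_append _ _ _ _ hp
      have h2 : p ∈ (a :: t).zip ((a :: t).rotate 1) := by
        rwa [List.rotate_cons_succ, List.rotate_zero]
      rw [hr]
      dsimp only
      unfold walkEdges
      rw [Multiset.mem_coe]
      have : Function.uncurry Sym2.mk p = s(p.1, p.2) := rfl
      exact this ▸ List.mem_map_of_mem (f := Function.uncurry Sym2.mk) h2
    have h1 := chain_rtg t a key u hu
    have h2 := chain_rtg t a key v hv
    exact ((show Relation.ReflTransGen r u a by haveI : Std.Symm r := ⟨hsym⟩; exact Std.Symm.symm _ _ h1)).trans h2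

private lemma sgCost_mono [Fintype V] {c : V → V → ℝ} (hnn : ∀ u v, 0 ≤ c u v)
    {F₁ F₂ : SimpleGraph V} (h : F₁ ≤ F₂) : sgCost c F₁ ≤ sgCost c F₂ := by
  classical
  unfold sgCost
  have : ∀ u v : V, (if F₁.Adj u v then c u v else 0) ≤ (if F₂.Adj u v then c u v else 0) := by
    intro u v
    by_cases h1 : F₁.Adj u v
    · rw [if_pos h1, if_pos (h h1)]
    · rw [if_neg h1]
      by_cases h2 : F₂.Adj u v
      · rw [if_pos h2]; exact hnn u v
      · rw [if_neg h2]
  have hsum : ∑ u : V, ∑ v : V, (if F₁.Adj u v then c u v else 0)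
      ≤ ∑ u : V, ∑ v : V, (if F₂.Adj u v then c u v else 0) :=
    Finset.sum_le_sum fun u _ => Finset.sum_le_sum fun v _ => this u v
  nlinarith [hsum]

private lemma sgCost_fromEdgeSet_le_mcost [Fintype V] [DecidableEq V] (c : V → V → ℝ)
    (hnn : ∀ u v, 0 ≤ c u v) (X : Multiset (Sym2 V)) :
    sgCost c (SimpleGraph.fromEdgeSet {e | e ∈ X ∧ ¬ e.IsDiag}) ≤ mcost c X := by
  classical
  set f : Sym2 V → ℝ := Sym2.lift ⟨fun a b => (c a b + c b a) / 2, fun _ _ => by ring⟩ with hf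
  have hf0 : ∀ e : Sym2 V, 0 ≤ f e := by
    intro e
    induction e using Sym2.ind with
    | _ a b =>
      rw [hf, Sym2.lift_mk]
      have := hnn a b; have := hnn b a
      dsimp only
      linarith
  set G' := SimpleGraph.fromEdgeSet {e | e ∈ X ∧ ¬ e.IsDiag} with hG'
  set D : Multiset (Sym2 V) := X.dedup.filter (fun e => ¬ e.IsDiag) with hD
  have hDX : D ≤ X := le_trans (Multiset.filter_le _ _) (Multiset.dedup_le X)
  have hDnodup : D.Nodup := (Multiset.nodup_dedup X).filter _
  have hmemD : ∀ e : Sym2 V, e ∈ D ↔ e ∈ X ∧ ¬ e.IsDiag := by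
    intro e; rw [hD, Multiset.mem_filter, Multiset.mem_dedup]
  -- step 1: ∑ over D ≤ mcost
  have step1 : (D.map f).sum ≤ mcost c X := by
    obtain ⟨u, hu⟩ := Multiset.le_iff_exists_add.1 hDX
    rw [mcost, ← hf, hu, Multiset.map_add, Multiset.sum_add]
    have : 0 ≤ (u.map f).sum := Multiset.sum_nonneg (by
      intro x hx
      obtain ⟨e, _, rfl⟩ := Multiset.mem_map.1 hx
      exact hf0 e)
    linarith
  -- step 2 : sgCost G' = ∑ e in D.toFinset, f e
  have hDfin : ∑ e ∈ D.toFinset, f e = (D.map f).sum := by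
    rw [Finset.sum]
    congr 1
    rw [Multiset.toFinset_val, Multiset.dedup_eq_self.2 hDnodup]
  have hadj : ∀ u v : V, G'.Adj u v ↔ s(u, v) ∈ X ∧ u ≠ v := by
    intro u v
    rw [hG', SimpleGraph.fromEdgeSet_adj]
    simp only [Set.mem_setOf_eq, Sym2.isDiag_iff_proj_eq]
    tauto
  have inner : ∀ a b : V,
      ∑ p ∈ (univ ×ˢ univ).filter (fun p : V × V => Function.uncurry Sym2.mk p = s(a, b)),
        (if G'.Adj p.1 p.2 then c p.1 p.2 else 0)
      = 2 * (if s(a, b) ∈ D.toFinset then f s(a, b) else 0) := by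
    intro a b
    by_cases hab : a = b
    · subst hab
      have hfib : (univ ×ˢ univ).filter (fun p : V × V => Function.uncurry Sym2.mk p = s(a, a)) = {(a, a)} := by
        ext p
        simp only [Finset.mem_filter, Finset.mem_product, Finset.mem_univ, true_and,
          Finset.mem_singleton]
        constructor
        · intro hp
          have : s(p.1, p.2) = s(a, a) := hp
          rw [Sym2.eq_iff] at this
          rcases this with ⟨h1, h2⟩ | ⟨h1, h2⟩ <;> exact Prod.ext h1 h2
        · rintro rfl; rfl
      rw [hfib, Finset.sum_singleton, if_neg (G'.irrefl), if_neg]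
      · ring
      · rw [Multiset.mem_toFinset, hmemD]
        intro ⟨_, hd⟩
        exact hd (Sym2.isDiag_iff_proj_eq.2 rfl)
    · have hfib : (univ ×ˢ univ).filter (fun p : V × V => Function.uncurry Sym2.mk p = s(a, b))
          = {(a, b), (b, a)} := by
        ext p
        simp only [Finset.mem_filter, Finset.mem_product, Finset.mem_univ, true_and,
          Finset.mem_insert, Finset.mem_singleton]
        constructor
        · intro hp
          have : s(p.1, p.2) = s(a, b) := hp
          rw [Sym2.eq_iff] at this
          rcases this with ⟨h1, h2⟩ | ⟨h1, h2⟩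
          · exact Or.inl (Prod.ext h1 h2)
          · exact Or.inr (Prod.ext h1 h2)
        · rintro (rfl | rfl) <;> simp [Sym2.eq_swap]
      have hne : ((a, b) : V × V) ≠ (b, a) := by
        intro h
        exact hab (congrArg Prod.fst h)
      rw [hfib, Finset.sum_insert (by simpa using hne), Finset.sum_singleton]
      by_cases hX : s(a, b) ∈ X
      · have hadjab : G'.Adj a b := (hadj a b).2 ⟨hX, hab⟩
        have hadjba : G'.Adj b a := hadjab.symm
        rw [if_pos hadjab, if_pos hadjba, if_pos]
        · rw [hf, Sym2.lift_mk]
          dsimp only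
          ring
        · rw [Multiset.mem_toFinset, hmemD]
          exact ⟨hX, by rw [Sym2.mk_isDiag_iff]; exact hab⟩
      · have h1 : ¬ G'.Adj a b := fun h => hX ((hadj a b).1 h).1
        have h2 : ¬ G'.Adj b a := fun h => hX (by
          have := ((hadj b a).1 h).1
          rwa [Sym2.eq_swap] at this)
        rw [if_neg h1, if_neg h2, if_neg]
        · ring
        · rw [Multiset.mem_toFinset, hmemD]
          exact fun ⟨hx, _⟩ => hX hx
  have key : ∑ u : V, ∑ v : V, (if G'.Adj u v then c u v else 0)
      = 2 * ∑ e ∈ D.toFinset, f e := by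
    rw [← Finset.sum_product']
    rw [← Finset.sum_fiberwise_of_maps_to (g := fun p : V × V => Function.uncurry Sym2.mk p)
      (t := (univ : Finset (Sym2 V))) (fun p _ => Finset.mem_univ _)]
    have : ∀ e ∈ (univ : Finset (Sym2 V)),
        ∑ p ∈ (univ ×ˢ univ).filter (fun p : V × V => Function.uncurry Sym2.mk p = e),
          (if G'.Adj p.1 p.2 then c p.1 p.2 else 0)
        = 2 * (if e ∈ D.toFinset then f e else 0) := by
      intro e _
      induction e using Sym2.ind with
      | _ a b => exact inner a b
    rw [Finset.sum_congr rfl this, ← Finset.mul_sum, Finset.sum_ite_mem, Finset.univ_inter]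
  calc sgCost c G' = ∑ e ∈ D.toFinset, f e := by
        have h2 : sgCost c G' = 1 / 2 * (2 * ∑ e ∈ D.toFinset, f e) := by
          rw [← key, sgCost]; congr!
        rw [h2]; ring
    _ = (D.map f).sum := hDfin
    _ ≤ mcost c X := step1

end Aux

/-- A minimum-cost spanning forest with exactly `m` components costs at most any
multigraph whose edges decompose into `m` closed walks covering all vertices. -/
theorem spanning_forest_lower_bound [Fintype V] [DecidableEq V]
    (c : V → V → ℝ) (m : ℕ)
    (hsymm : ∀ u v, c u v = c v u)
    (hnonneg : ∀ u v, 0 ≤ c u v)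
    (F : SimpleGraph V)
    (hac : F.IsAcyclic)
    (hcomp : Nat.card F.ConnectedComponent = m)
    (hmin : ∀ F' : SimpleGraph V, F'.IsAcyclic → Nat.card F'.ConnectedComponent = m →
      sgCost c F ≤ sgCost c F')
    (X : Multiset (Sym2 V)) (ws : Fin m → List V)
    (hX : X = ∑ i, walkEdges (ws i))
    (hcover : ∀ v, ∃ i, v ∈ ws i) :
    sgCost c F ≤ mcost c X := by
  classical
  set G' := SimpleGraph.fromEdgeSet {e | e ∈ X ∧ ¬ e.IsDiag} with hG'
  have hreach : ∀ i : Fin m, ∀ u ∈ ws i, ∀ v ∈ ws i, G'.Reachable u v := by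
    intro i u hu v hv
    have h := walk_mem_rtg hu hv
    clear hu hv
    induction h with
    | refl => exact SimpleGraph.Reachable.refl u
    | @tail x y _ hstep ih =>
      by_cases hxy : x = y
      · exact hxy ▸ ih
      · refine ih.trans (SimpleGraph.Adj.reachable ?_)
        rw [hG', SimpleGraph.fromEdgeSet_adj]
        refine ⟨⟨?_, ?_⟩, hxy⟩
        · rw [hX]; exact Multiset.mem_sum.2 ⟨i, Finset.mem_univ i, hstep⟩
        · rw [Sym2.mk_isDiag_iff]; exact hxy
  have hrep : ∀ C : G'.ConnectedComponent, ∃ v : V, G'.connectedComponentMk v = C :=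
    fun C => Quot.exists_rep C
  have hinj : ∃ φ : G'.ConnectedComponent → Fin m, Function.Injective φ := by
    choose rep hrepeq using hrep
    choose idx hidx using fun C => hcover (rep C)
    refine ⟨idx, ?_⟩
    intro C D hCD
    rw [← hrepeq C, ← hrepeq D]
    exact SimpleGraph.ConnectedComponent.sound
      (hreach (idx C) _ (hidx C) _ (hCD ▸ hidx D))
  obtain ⟨φ, hφ⟩ := hinj
  have hcard1 : Nat.card G'.ConnectedComponent ≤ m := by
    have := Nat.card_le_card_of_injective φ hφ
    simpa [Nat.card_eq_fintype_card] using this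
  have hcard2 : m ≤ Fintype.card V := by
    rw [← hcomp]
    have hsurj : Function.Surjective F.connectedComponentMk := fun C => Quot.exists_rep C
    have := Nat.card_le_card_of_surjective _ hsurj
    simpa [Nat.card_eq_fintype_card] using this
  obtain ⟨d, hd⟩ : ∃ d, m + d = Fintype.card V := ⟨Fintype.card V - m, by omega⟩
  obtain ⟨F', hF'le, hF'ac, hF'card⟩ := exists_forest G' d m hd hcard1
  calc sgCost c F ≤ sgCost c F' := hmin F' hF'ac hF'card
    _ ≤ sgCost c G' := sgCost_mono hnonneg hF'le
    _ ≤ mcost c X := sgCost_fromEdgeSet_le_mcost c hnonneg X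
end
end
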